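/- arXiv:2412.05928 — 4 statements merged into one kernel-verified Lean document; each statement's English description precedes it below -/
import Mathlib

section
/- Let T : H ⇒ H be a maximal monotone operator on a Hilbert space H and let 0 < r ≤ r'. Then for every u ∈ H, ‖u − J_r(u)‖ ≤ 2‖u − J_{r'}(u)‖, where J_s = (I + sT)^{-1} denotes the resolvent of T with parameter s. -/
open Filter Topology Set
open scoped RealInnerProductSpace

variable {H : Type*} [NormedAddCommGroup H] [InnerProductSpace ℝ H] [CompleteSpace H]

/-- A set-valued operator `T : H ⇒ H` is monotone. -/
def MonotoneOp (T : H → Set H) : Prop :=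
  ∀ x y u v, u ∈ T x → v ∈ T y → 0 ≤ ⟪u - v, x - y⟫

/-- A set-valued operator is maximal monotone: it is monotone and any pair
monotonically related to its graph belongs to its graph. -/
def MaximalMonotoneOp (T : H → Set H) : Prop :=
  MonotoneOp T ∧ ∀ x u, (∀ y v, v ∈ T y → 0 ≤ ⟪u - v, x - y⟫) → u ∈ T x

/-- `J` is the resolvent `(I + r T)⁻¹` of `T`:
for every `u`, `r⁻¹ • (u - J u) ∈ T (J u)`. -/
def IsResolvent (T : H → Set H) (r : ℝ) (J : H → H) : Prop :=
  ∀ u, r⁻¹ • (u - J u) ∈ T (J u)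

/-- Proposition 2.4 (ii): for resolvents with parameters `0 < r ≤ r'`,
`‖u - J_r u‖ ≤ 2 ‖u - J_{r'} u‖`. -/
theorem stmt_1 (T : H → Set H) (hT : MaximalMonotoneOp T)
    (r r' : ℝ) (hr : 0 < r) (hrr' : r ≤ r')
    (J J' : H → H) (hJ : IsResolvent T r J) (hJ' : IsResolvent T r' J') (u : H) :
    ‖u - J u‖ ≤ 2 * ‖u - J' u‖ := by
  have hr' : 0 < r' := lt_of_lt_of_le hr hrr'
  set a := u - J u with ha
  set b := u - J' u with hb
  have hmono := hT.1 (J u) (J' u) _ _ (hJ u) (hJ' u)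
  have hab : J u - J' u = b - a := by rw [ha, hb]; abel
  rw [hab] at hmono
  have key : 0 ≤ r⁻¹ * ⟪a, b - a⟫ - r'⁻¹ * ⟪b, b - a⟫ := by
    rw [inner_sub_left, real_inner_smul_left, real_inner_smul_left] at hmono
    linarith
  have h1 : ⟪a, b - a⟫ = ⟪a, b⟫ - ‖a‖ ^ 2 := by
    rw [inner_sub_right, real_inner_self_eq_norm_sq]
  have h2 : ⟪b, b - a⟫ = ‖b‖ ^ 2 - ⟪a, b⟫ := by
    rw [inner_sub_right, real_inner_self_eq_norm_sq, real_inner_comm]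
  rw [h1, h2] at key
  have key2 : r * (‖b‖ ^ 2 - ⟪a, b⟫) ≤ r' * (⟪a, b⟫ - ‖a‖ ^ 2) := by
    have h : 0 ≤ (r * r') * (r⁻¹ * (⟪a, b⟫ - ‖a‖ ^ 2) - r'⁻¹ * (‖b‖ ^ 2 - ⟪a, b⟫)) :=
      mul_nonneg (by positivity) key
    have heq : (r * r') * (r⁻¹ * (⟪a, b⟫ - ‖a‖ ^ 2) - r'⁻¹ * (‖b‖ ^ 2 - ⟪a, b⟫)) =
        r' * (⟪a, b⟫ - ‖a‖ ^ 2) - r * (‖b‖ ^ 2 - ⟪a, b⟫) := by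
      field_simp
    rw [heq] at h
    linarith
  have hib : ⟪a, b⟫ ≤ ‖a‖ * ‖b‖ := real_inner_le_norm a b
  have hsq : ‖a‖ ^ 2 ≤ 2 * (‖a‖ * ‖b‖) := by
    nlinarith [norm_nonneg a, norm_nonneg b, sq_nonneg (‖b‖)]
  nlinarith [norm_nonneg a, norm_nonneg b]
end

section
/- Let A : H → H be a symmetric (self-adjoint) invertible bounded linear operator on a Hilbert space H and T : H ⇒ H a maximal monotone set-valued map. Then the set-valued map A ∘ T ∘ A (i.e. x ↦ A(T(A x))) is maximal monotone. -/
open Filter Topology Set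
open scoped RealInnerProductSpace

variable {H : Type*} [NormedAddCommGroup H] [InnerProductSpace ℝ H] [CompleteSpace H]

section AdjointConjugation

variable {E : Type*} [NormedAddCommGroup E] [InnerProductSpace ℝ E] {T : E → Set E}

theorem inner_map_sub_map_sub_of_adjoint {F : Type*} [FunLike F E E] [AddMonoidHomClass F E E]
    {L M : F} (hLM : ∀ x y, ⟪M x, y⟫ = ⟪x, L y⟫) (a b x y : E) :
    ⟪M a - M b, x - y⟫ = ⟪a - b, L x - L y⟫ := by
  rw [← map_sub, ← map_sub, hLM]

theorem MonotoneOp.image_comp_of_adjoint {L M : E →L[ℝ] E} (hT : MonotoneOp T)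
    (hLM : ∀ x y, ⟪M x, y⟫ = ⟪x, L y⟫) : MonotoneOp (fun x => M '' T (L x)) := by
  rintro x y _ _ ⟨ξ, hξ, rfl⟩ ⟨η, hη, rfl⟩
  rw [inner_map_sub_map_sub_of_adjoint hLM]
  exact hT _ _ ξ η hξ hη

theorem MaximalMonotoneOp.image_comp_of_adjoint {L M : E ≃L[ℝ] E} (hT : MaximalMonotoneOp T)
    (hLM : ∀ x y, ⟪M x, y⟫ = ⟪x, L y⟫) : MaximalMonotoneOp (fun x => M '' T (L x)) := by
  refine ⟨hT.1.image_comp_of_adjoint (L := L) (M := M) hLM,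
    fun x u hu => ⟨M.symm u, hT.2 _ _ ?_, M.apply_symm_apply u⟩⟩
  intro z η hη
  have h := hu (L.symm z) (M η) ⟨η, by rwa [L.apply_symm_apply], rfl⟩
  rwa [← M.apply_symm_apply u, inner_map_sub_map_sub_of_adjoint hLM,
    L.apply_symm_apply] at h

end AdjointConjugation

/-- Lemma 2.2: if `A` is a symmetric invertible bounded linear operator and `T`
is maximal monotone, then `A T A` is maximal monotone. -/
theorem stmt_5 (T : H → Set H) (hT : MaximalMonotoneOp T)
    (A : H ≃L[ℝ] H) (hA : ∀ x y : H, ⟪A x, y⟫ = ⟪x, A y⟫) :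
    MaximalMonotoneOp (fun x => (A : H → H) '' T (A x)) :=
  hT.image_comp_of_adjoint hA
end

section
/- Let H be a Hilbert space with closed subspaces H₁ and H₂ = H₁^⊥, and T : H ⇒ H a set-valued operator. Then the partial inverse T_{H₁}, whose graph is {(P_{H₁}u + P_{H₂}ξ, P_{H₁}ξ + P_{H₂}u) | ξ ∈ T(u)}, is (maximal) monotone if and only if T is (maximal) monotone. -/
open Filter Topology Set
open scoped RealInnerProductSpace

variable {H : Type*} [NormedAddCommGroup H] [InnerProductSpace ℝ H] [CompleteSpace H]

/-! The map `σ(u, ξ) = (P₁u + P₂ξ, P₁ξ + P₂u)`, whose image of the graph of `T` is the graph of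
the partial inverse, is a linear involution of `H × H`. Splitting along `H = H₁ ⊕ H₂` gives
`⟪ξ, u⟫ = ⟪P₁ξ, P₁u⟫ + ⟪P₂ξ, P₂u⟫`, which is symmetric under exchanging `P₂u` and `P₂ξ`, so `σ`
preserves the monotonicity pairing `⟪ξ - η, u - v⟫` of two graph points. Any such involution
carries (maximal) monotone graphs to (maximal) monotone graphs, and, being its own inverse,
reflects them as well. -/

def mapGraph {α : Type*} (σ : α × α → α × α) (T : α → Set α) : α → Set α :=
  fun x => {y | ∃ u ξ, ξ ∈ T u ∧ x = (σ (u, ξ)).1 ∧ y = (σ (u, ξ)).2}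

section mapGraph

variable {α : Type*} {σ : α × α → α × α}

theorem mem_mapGraph_iff (hσ : Function.Involutive σ) (T : α → Set α) {x y : α} :
    y ∈ mapGraph σ T x ↔ (σ (x, y)).2 ∈ T (σ (x, y)).1 := by
  constructor
  · rintro ⟨u, ξ, hξ, rfl, rfl⟩
    simpa [hσ (u, ξ)] using hξ
  · intro h
    refine ⟨_, _, h, ?_, ?_⟩ <;> rw [hσ (x, y)]

theorem mapGraph_mapGraph (hσ : Function.Involutive σ) (T : α → Set α) :
    mapGraph σ (mapGraph σ T) = T := by
  ext x y
  rw [mem_mapGraph_iff hσ, mem_mapGraph_iff hσ, hσ (x, y)]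

end mapGraph

section MonotoneTransfer

variable {E : Type*} [NormedAddCommGroup E] [InnerProductSpace ℝ E]
  {σ : E × E →ₗ[ℝ] E × E}

theorem inner_sub_map_eq (hσ : ∀ p, ⟪(σ p).2, (σ p).1⟫ = ⟪p.2, p.1⟫) (p q : E × E) :
    ⟪(σ p).2 - (σ q).2, (σ p).1 - (σ q).1⟫ = ⟪p.2 - q.2, p.1 - q.1⟫ := by
  simpa only [map_sub, Prod.fst_sub, Prod.snd_sub] using hσ (p - q)

theorem MonotoneOp.mapGraph (hσ : ∀ p, ⟪(σ p).2, (σ p).1⟫ = ⟪p.2, p.1⟫) {T : E → Set E}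
    (hT : MonotoneOp T) : MonotoneOp (mapGraph σ T) := by
  rintro _ _ _ _ ⟨u, ξ, hξ, rfl, rfl⟩ ⟨v, η, hη, rfl, rfl⟩
  rw [inner_sub_map_eq hσ]
  exact hT u v ξ η hξ hη

theorem MaximalMonotoneOp.mapGraph (hσ : ∀ p, ⟪(σ p).2, (σ p).1⟫ = ⟪p.2, p.1⟫)
    (hinv : Function.Involutive σ) {T : E → Set E} (hT : MaximalMonotoneOp T) :
    MaximalMonotoneOp (mapGraph σ T) := by
  refine ⟨hT.1.mapGraph hσ, fun x y hxy => (mem_mapGraph_iff hinv T).2 (hT.2 _ _ ?_)⟩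
  intro u ξ hξ
  have hpair := inner_sub_map_eq hσ (x, y) (σ (u, ξ))
  rw [hinv (u, ξ)] at hpair
  exact hpair ▸ hxy _ _ ⟨u, ξ, hξ, rfl, rfl⟩

theorem monotoneOp_mapGraph_iff (hσ : ∀ p, ⟪(σ p).2, (σ p).1⟫ = ⟪p.2, p.1⟫)
    (hinv : Function.Involutive σ) (T : E → Set E) :
    MonotoneOp (mapGraph σ T) ↔ MonotoneOp T :=
  ⟨fun h => mapGraph_mapGraph hinv T ▸ h.mapGraph hσ, fun h => h.mapGraph hσ⟩

theorem maximalMonotoneOp_mapGraph_iff (hσ : ∀ p, ⟪(σ p).2, (σ p).1⟫ = ⟪p.2, p.1⟫)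
    (hinv : Function.Involutive σ) (T : E → Set E) :
    MaximalMonotoneOp (mapGraph σ T) ↔ MaximalMonotoneOp T :=
  ⟨fun h => mapGraph_mapGraph hinv T ▸ h.mapGraph hσ hinv, fun h => h.mapGraph hσ hinv⟩

end MonotoneTransfer

namespace Submodule

variable {E : Type*} [NormedAddCommGroup E] [InnerProductSpace ℝ E]
  (K : Submodule ℝ E)

theorem inner_add_add_of_mem_orthogonal {a b c d : E} (ha : a ∈ K) (hb : b ∈ Kᗮ) (hc : c ∈ K)
    (hd : d ∈ Kᗮ) : ⟪a + b, c + d⟫ = ⟪a, c⟫ + ⟪b, d⟫ := by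
  rw [inner_add_left, inner_add_right, inner_add_right, inner_right_of_mem_orthogonal ha hd,
    inner_left_of_mem_orthogonal hc hb, add_zero, zero_add]

variable [K.HasOrthogonalProjection]

theorem inner_eq_inner_starProjection_add (x y : E) :
    ⟪x, y⟫ = ⟪K.starProjection x, K.starProjection y⟫ +
      ⟪x - K.starProjection x, y - K.starProjection y⟫ := by
  conv_lhs => rw [← add_sub_cancel (K.starProjection x) x, ← add_sub_cancel (K.starProjection y) y]
  exact K.inner_add_add_of_mem_orthogonal (K.starProjection_apply_mem x)
    (K.sub_starProjection_mem_orthogonal x) (K.starProjection_apply_mem y)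
    (K.sub_starProjection_mem_orthogonal y)

noncomputable def swapOrthogonal : E × E →ₗ[ℝ] E × E where
  toFun p := (K.starProjection p.1 + (p.2 - K.starProjection p.2),
    K.starProjection p.2 + (p.1 - K.starProjection p.1))
  map_add' p q := by ext <;> simp only [Prod.fst_add, Prod.snd_add, map_add] <;> abel
  map_smul' c p := by ext <;> simp [smul_sub]

theorem swapOrthogonal_involutive : Function.Involutive K.swapOrthogonal := by
  have hP (v : E) : K.starProjection (K.starProjection v) = K.starProjection v :=
    K.starProjection_eq_self_iff.2 (K.starProjection_apply_mem v)
  rintro ⟨u, ξ⟩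
  simp [swapOrthogonal, hP]

theorem inner_swapOrthogonal (p : E × E) :
    ⟪(K.swapOrthogonal p).2, (K.swapOrthogonal p).1⟫ = ⟪p.2, p.1⟫ := by
  simp only [swapOrthogonal, LinearMap.coe_mk, AddHom.coe_mk]
  rw [K.inner_eq_inner_starProjection_add p.2, K.inner_add_add_of_mem_orthogonal
    (K.starProjection_apply_mem _) (K.sub_starProjection_mem_orthogonal _)
    (K.starProjection_apply_mem _) (K.sub_starProjection_mem_orthogonal _),
    real_inner_comm (p.1 - _)]

end Submodule

/-- Lemma 2.6: the partial inverse of `T` with respect to a closed subspace `H₁`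
is (maximal) monotone iff `T` is (maximal) monotone. `P₁` is the orthogonal
projection onto `H₁` and `x ↦ x - P₁ x` is the projection onto `H₁ᗮ`. -/
theorem stmt_7 (T : H → Set H) (H₁ : Submodule ℝ H)
    (P₁ : H →L[ℝ] H) (hP₁ : ∀ x : H, P₁ x ∈ H₁ ∧ x - P₁ x ∈ H₁ᗮ) :
    (MonotoneOp (fun x => {y : H | ∃ u ξ : H, ξ ∈ T u ∧
        x = P₁ u + (ξ - P₁ ξ) ∧ y = P₁ ξ + (u - P₁ u)}) ↔ MonotoneOp T) ∧
    (MaximalMonotoneOp (fun x => {y : H | ∃ u ξ : H, ξ ∈ T u ∧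
        x = P₁ u + (ξ - P₁ ξ) ∧ y = P₁ ξ + (u - P₁ u)}) ↔ MaximalMonotoneOp T) := by
  have : H₁.HasOrthogonalProjection := ⟨fun x => ⟨P₁ x, hP₁ x⟩⟩
  obtain rfl : P₁ = H₁.starProjection :=
    ContinuousLinearMap.ext fun x =>
      (H₁.eq_starProjection_of_mem_orthogonal (hP₁ x).1 (hP₁ x).2).symm
  exact ⟨monotoneOp_mapGraph_iff H₁.inner_swapOrthogonal H₁.swapOrthogonal_involutive T,
    maximalMonotoneOp_mapGraph_iff H₁.inner_swapOrthogonal H₁.swapOrthogonal_involutive T⟩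
end

section
/- Let D ⊆ H be nonempty closed convex, F : D → H nonexpansive, {u_k} a sequence in D, and u ∈ H. If u_k ⇀ u weakly and u_k − F(u_k) → 0 strongly, then F(u) = u (demiclosedness principle). -/
open Filter Topology Set
open scoped RealInnerProductSpace

variable {H : Type*} [NormedAddCommGroup H] [InnerProductSpace ℝ H] [CompleteSpace H]

/-- Lemma 2.7 (demiclosedness principle): if `F` is nonexpansive on a nonempty
closed convex set `D`, `u_k ∈ D`, `u_k ⇀ u` weakly and `u_k - F u_k → 0`
strongly, then `F u = u`. -/
theorem stmt_10 (D : Set H) (hne : D.Nonempty) (hcl : IsClosed D) (hconv : Convex ℝ D)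
    (F : H → H) (hF : ∀ x ∈ D, ∀ y ∈ D, ‖F x - F y‖ ≤ ‖x - y‖)
    (u : ℕ → H) (hu : ∀ k, u k ∈ D) (l : H)
    (hweak : ∀ z : H, Tendsto (fun k => ⟪u k, z⟫) atTop (𝓝 ⟪l, z⟫))
    (hstrong : Tendsto (fun k => u k - F (u k)) atTop (𝓝 0)) :
    F l = l := by
  have hweak' : ∀ z : H, Tendsto (fun k => ⟪u k - l, z⟫) atTop (𝓝 0) := by
    intro z
    have := (hweak z).sub_const ⟪l, z⟫
    simpa [inner_sub_left] using this
  -- l ∈ D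
  have hlD : l ∈ D := by
    obtain ⟨p, hpD, hp⟩ := exists_norm_eq_iInf_of_complete_convex hne
      hcl.isComplete hconv l
    have hchar := (norm_eq_iInf_iff_real_inner_le_zero hconv hpD).1 hp
    have h1 : Tendsto (fun k => ⟪u k - p, l - p⟫) atTop (𝓝 ⟪l - p, l - p⟫) := by
      have := (hweak (l - p)).sub_const ⟪p, l - p⟫
      simpa only [inner_sub_left] using this
    have h2 : ⟪l - p, l - p⟫ ≤ 0 := by
      refine le_of_tendsto h1 (Eventually.of_forall fun k => ?_)
      rw [real_inner_comm]; exact hchar _ (hu k)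
    have h3 : l - p = 0 :=
      inner_self_eq_zero.1 (le_antisymm h2 real_inner_self_nonneg)
    rw [sub_eq_zero] at h3
    rw [h3]; exact hpD
  -- boundedness of (u k) via Banach–Steinhaus
  obtain ⟨C, hC⟩ : ∃ C, ∀ k, ‖u k‖ ≤ C := by
    have hb : ∀ z : H, ∃ c : ℝ, ∀ k, ‖(innerSL ℝ (u k)) z‖ ≤ c := by
      intro z
      obtain ⟨c, hc⟩ := (hweak z).norm.bddAbove_range
      exact ⟨c, fun k => hc ⟨k, rfl⟩⟩
    obtain ⟨C, hC⟩ := banach_steinhaus (g := fun k => innerSL ℝ (u k)) hb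
    exact ⟨C, fun k => by simpa [innerSL_apply_norm] using hC k⟩
  -- the three sequences
  set a : ℕ → ℝ := fun k => ‖u k - F (u k)‖ with ha
  set b : ℕ → ℝ := fun k => ‖u k - l‖ with hb
  set c : ℕ → ℝ := fun k => ⟪u k - l, l - F l⟫ with hc
  have hA : Tendsto a atTop (𝓝 0) := by simpa using hstrong.norm
  have hCc : Tendsto c atTop (𝓝 0) := hweak' (l - F l)
  have hBbdd : ∀ k, b k ≤ C + ‖l‖ := fun k =>
    (norm_sub_le _ _).trans (add_le_add (hC k) le_rfl)
  have hAB : Tendsto (fun k => a k * b k) atTop (𝓝 0) := by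
    refine Tendsto.zero_mul_isBoundedUnder_le hA ?_
    exact isBoundedUnder_of ⟨C + ‖l‖, fun k => by
      simpa [hb, abs_of_nonneg (norm_nonneg _)] using hBbdd k⟩
  -- key inequality
  have key : ∀ k, ‖l - F l‖ ^ 2 ≤ a k ^ 2 + 2 * (a k * b k) - 2 * c k := by
    intro k
    have h1 : ‖u k - F l‖ ≤ a k + b k := by
      calc ‖u k - F l‖ = ‖(u k - F (u k)) + (F (u k) - F l)‖ := by rw [sub_add_sub_cancel]
        _ ≤ ‖u k - F (u k)‖ + ‖F (u k) - F l‖ := norm_add_le _ _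
        _ ≤ a k + b k := add_le_add le_rfl (hF _ (hu k) _ hlD)
    have h2 : ‖u k - F l‖ ^ 2 ≤ (a k + b k) ^ 2 :=
      pow_le_pow_left₀ (norm_nonneg _) h1 2
    have h3 : ‖u k - F l‖ ^ 2 = b k ^ 2 + 2 * c k + ‖l - F l‖ ^ 2 := by
      have := norm_add_sq_real (u k - l) (l - F l)
      simpa [sub_add_sub_cancel] using this
    have h4 : (a k + b k) ^ 2 = a k ^ 2 + 2 * (a k * b k) + b k ^ 2 := by ring
    nlinarith [h2, h3, h4]
  have hlim : Tendsto (fun k => a k ^ 2 + 2 * (a k * b k) - 2 * c k) atTop (𝓝 0) := by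
    have := ((hA.pow 2).add (hAB.const_mul 2)).sub (hCc.const_mul 2)
    simpa using this
  have hle : ‖l - F l‖ ^ 2 ≤ 0 := ge_of_tendsto hlim (Eventually.of_forall key)
  have : ‖l - F l‖ = 0 := by nlinarith [norm_nonneg (l - F l), sq_nonneg ‖l - F l‖]
  have : l - F l = 0 := norm_eq_zero.1 this
  linear_combination (norm := module) -this
end
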